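/- For any logic ILX containing the schema M: (A ▷ B) → (A ∧ □C ▷ B ∧ □C), if Γ ≺_S Δ then Γ ≺_{S ∪ Δ^□} Δ, where Δ^□ = { □C : □C ∈ Δ }. -/

import Mathlib

inductive ILForm : Type
  | bot : ILForm
  | var : ℕ → ILForm
  | imp : ILForm → ILForm → ILForm
  | box : ILForm → ILForm
  | rhd : ILForm → ILForm → ILForm
  deriving DecidableEq

namespace ILForm

def neg (A : ILForm) : ILForm := A.imp ILForm.bot
def or (A B : ILForm) : ILForm := A.neg.imp B
def and (A B : ILForm) : ILForm := (A.imp B.neg).neg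
def dia (A : ILForm) : ILForm := A.neg.box.neg

end ILForm

/-- A Boolean valuation: respects `⊥` and `→`, arbitrary on variables, boxes and `▷`. -/
def IsBoolVal (v : ILForm → Bool) : Prop :=
  v ILForm.bot = false ∧ ∀ A B : ILForm, v (A.imp B) = (!(v A) || v B)

/-- Classical tautologies in the modal language. -/
def ILTaut (A : ILForm) : Prop := ∀ v, IsBoolVal v → v A = true

/-- Provability in the interpretability logic IL. -/
inductive ILProv : ILForm → Prop
  | taut {A : ILForm} : ILTaut A → ILProv A
  | K {A B : ILForm} : ILProv (((A.imp B).box).imp ((A.box).imp (B.box)))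
  | L {A : ILForm} : ILProv ((((A.box).imp A).box).imp (A.box))
  | J1 {A B : ILForm} : ILProv (((A.imp B).box).imp (A.rhd B))
  | J2 {A B C : ILForm} : ILProv (((A.rhd B).and (B.rhd C)).imp (A.rhd C))
  | J3 {A B C : ILForm} : ILProv (((A.rhd C).and (B.rhd C)).imp ((A.or B).rhd C))
  | J4 {A B : ILForm} : ILProv ((A.rhd B).imp ((A.dia).imp (B.dia)))
  | J5 {A : ILForm} : ILProv ((A.dia).rhd A)
  | mp {A B : ILForm} : ILProv (A.imp B) → ILProv A → ILProv B
  | nec {A : ILForm} : ILProv A → ILProv (A.box)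

/-- An extension of IL: contains all IL theorems, closed under modus ponens and necessitation. -/
structure ILExtension (P : ILForm → Prop) : Prop where
  il : ∀ {A}, ILProv A → P A
  mp : ∀ {A B}, P (A.imp B) → P A → P B
  nec : ∀ {A}, P A → P (A.box)

/-- Derivability from a set of assumptions in the logic `P`. -/
inductive Deriv (P : ILForm → Prop) (S : Set ILForm) : ILForm → Prop
  | thm {A : ILForm} : P A → Deriv P S A
  | mem {A : ILForm} : A ∈ S → Deriv P S A
  | mp {A B : ILForm} : Deriv P S (A.imp B) → Deriv P S A → Deriv P S B

def ILConsistent (P : ILForm → Prop) (S : Set ILForm) : Prop := ¬ Deriv P S ILForm.bot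

/-- Maximal consistent set w.r.t. the logic `P`. -/
def ILMCS (P : ILForm → Prop) (S : Set ILForm) : Prop :=
  ILConsistent P S ∧ ∀ T : Set ILForm, S ⊂ T → ¬ ILConsistent P T

/-- Finite disjunction; the empty disjunction is `⊥`. -/
def bigOr : List ILForm → ILForm
  | [] => ILForm.bot
  | A :: l => A.or (bigOr l)

/-- `Assuring Γ Δ S` ("Γ ≺_S Δ"): Δ is an S-assuring successor of Γ. -/
def Assuring (Γ Δ : Set ILForm) (S : Set ILForm) : Prop :=
  ∀ (A : ILForm) (L : List ILForm), (∀ B ∈ L, B ∈ S) →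
    (A.neg.rhd (bigOr (L.map ILForm.neg))) ∈ Γ → A ∈ Δ ∧ A.box ∈ Δ

/-- `Succ Γ Δ` ("Γ ≺ Δ"): whenever □A ∈ Γ, both A and □A are in Δ. -/
def Succ (Γ Δ : Set ILForm) : Prop :=
  ∀ A : ILForm, A.box ∈ Γ → A ∈ Δ ∧ A.box ∈ Δ

/-! Only finitely many boxed formulas occur in a given label, so it suffices to add one
`□C ∈ Δ` at a time. From `¬A ▷ B ∨ ¬□C ∈ Γ` the principle M gives
`¬A ∧ □C ▷ (B ∨ ¬□C) ∧ □C`, hence `¬(□C → A) ▷ B ∈ Γ`; the label `S` then puts `□C → A`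
and `□(□C → A)` in `Δ`, and `□C, □□C ∈ Δ` yield `A, □A ∈ Δ`. -/

namespace IsBoolVal

variable {v : ILForm → Bool} (hv : IsBoolVal v) (A B : ILForm)
include hv

theorem imp : v (A.imp B) = (!v A || v B) := hv.2 A B

theorem neg : v A.neg = !v A := by simp [ILForm.neg, hv.imp, hv.1]

theorem or : v (A.or B) = (v A || v B) := by simp [ILForm.or, hv.imp, hv.neg]

theorem and : v (A.and B) = (v A && v B) := by simp [ILForm.and, hv.imp, hv.neg]

end IsBoolVal

theorem Deriv.cut {P : ILForm → Prop} {S : Set ILForm} {A B : ILForm}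
    (h : Deriv P (insert A S) B) (hA : Deriv P S A) : Deriv P S B := by
  induction h with
  | thm h => exact .thm h
  | mem h =>
    rcases h with rfl | h
    · exact hA
    · exact .mem h
  | mp _ _ ih₁ ih₂ => exact .mp ih₁ ih₂

namespace ILExtension

variable {P : ILForm → Prop} (hP : ILExtension P)
include hP

theorem of_taut {A : ILForm} (h : ILTaut A) : P A := hP.il (.taut h)

theorem imp_trans {A B C : ILForm} (h₁ : P (A.imp B)) (h₂ : P (B.imp C)) : P (A.imp C) :=
  hP.mp (hP.mp (hP.of_taut fun v hv => by simp only [hv.imp]; grind) h₁) h₂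

theorem box_mono {A B : ILForm} (h : P (A.imp B)) : P (A.box.imp B.box) :=
  hP.mp (hP.il .K) (hP.nec h)

/-- Axiom 4 is derivable from Löb's axiom, applied to `A ∧ □A`. -/
theorem box_imp_box_box (A : ILForm) : P (A.box.imp A.box.box) := by
  have hleft : P ((A.and A.box).box.imp A.box) :=
    hP.box_mono (hP.of_taut fun v hv => by simp only [hv.imp, hv.and]; grind)
  have hright : P ((A.and A.box).box.imp A.box.box) :=
    hP.box_mono (hP.of_taut fun v hv => by simp only [hv.imp, hv.and]; grind)
  have hreflect : P (A.imp ((A.and A.box).box.imp (A.and A.box))) :=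
    hP.mp (hP.of_taut fun v hv => by simp only [hv.imp, hv.and]; grind) hleft
  exact hP.imp_trans (hP.imp_trans (hP.box_mono hreflect) (hP.il .L)) hright

theorem exists_bigOr_neg_imp_of_subset_insert {S : Set ILForm} {X : ILForm} :
    ∀ L : List ILForm, (∀ B ∈ L, B ∈ insert X S) →
      ∃ L' : List ILForm, (∀ B ∈ L', B ∈ S) ∧
        P ((bigOr (L.map ILForm.neg)).imp ((bigOr (L'.map ILForm.neg)).or X.neg))
  | [], _ => ⟨[], by simp, hP.of_taut fun v hv => by simp only [List.map_nil, bigOr, hv.imp, hv.1]; rfl⟩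
  | B :: L, hL => by
    obtain ⟨L', hL'S, hL'⟩ :=
      exists_bigOr_neg_imp_of_subset_insert L fun B hB => hL B (List.mem_cons_of_mem _ hB)
    rcases hL B List.mem_cons_self with rfl | hB
    · exact ⟨L', hL'S, hP.mp (hP.of_taut fun v hv => by
        simp only [List.map_cons, bigOr, hv.imp, hv.or, hv.neg]; grind) hL'⟩
    · refine ⟨B :: L', ?_, hP.mp (hP.of_taut fun v hv => by
        simp only [List.map_cons, bigOr, hv.imp, hv.or, hv.neg]; grind) hL'⟩
      simpa [hB] using hL'S

end ILExtension

namespace ILMCS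

variable {P : ILForm → Prop} {Γ : Set ILForm} (hΓ : ILMCS P Γ)
include hΓ

theorem mem_of_deriv {A : ILForm} (h : Deriv P Γ A) : A ∈ Γ := by
  by_contra hA
  have hΓA : Γ ⊂ insert A Γ := Set.ssubset_insert hA
  exact hΓ.1 (Deriv.cut (not_not.mp (hΓ.2 _ hΓA)) h)

theorem mem_of_prov {A : ILForm} (h : P A) : A ∈ Γ := hΓ.mem_of_deriv (.thm h)

theorem mem_of_imp_mem {A B : ILForm} (hAB : A.imp B ∈ Γ) (hA : A ∈ Γ) : B ∈ Γ :=
  hΓ.mem_of_deriv (.mp (.mem hAB) (.mem hA))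

theorem mem_of_prov_imp {A B : ILForm} (hAB : P (A.imp B)) (hA : A ∈ Γ) : B ∈ Γ :=
  hΓ.mem_of_imp_mem (hΓ.mem_of_prov hAB) hA

theorem and_mem (hP : ILExtension P) {A B : ILForm} (hA : A ∈ Γ) (hB : B ∈ Γ) :
    A.and B ∈ Γ :=
  hΓ.mem_of_imp_mem (hΓ.mem_of_prov_imp
    (hP.of_taut fun v hv => by simp only [hv.imp, hv.and]; grind) hA) hB

theorem rhd_mem_of_imp_right (hP : ILExtension P) {A B B' : ILForm} (h : A.rhd B ∈ Γ)
    (hB : P (B.imp B')) : A.rhd B' ∈ Γ :=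
  hΓ.mem_of_prov_imp (hP.il .J2)
    (hΓ.and_mem hP h (hΓ.mem_of_prov (hP.mp (hP.il .J1) (hP.nec hB))))

theorem rhd_mem_of_imp_left (hP : ILExtension P) {A A' B : ILForm} (h : A.rhd B ∈ Γ)
    (hA : P (A'.imp A)) : A'.rhd B ∈ Γ :=
  hΓ.mem_of_prov_imp (hP.il .J2)
    (hΓ.and_mem hP (hΓ.mem_of_prov (hP.mp (hP.il .J1) (hP.nec hA))) h)

end ILMCS

namespace Assuring

variable {P : ILForm → Prop} {Γ Δ S : Set ILForm}

theorem insert_box (hP : ILExtension P)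
    (hM : ∀ A B C : ILForm, P ((A.rhd B).imp ((A.and C.box).rhd (B.and C.box))))
    (hΓ : ILMCS P Γ) (hΔ : ILMCS P Δ) (h : Assuring Γ Δ S) {C : ILForm} (hC : C.box ∈ Δ) :
    Assuring Γ Δ (insert C.box S) := by
  intro A L hL hAL
  obtain ⟨L', hL'S, hLL'⟩ := hP.exists_bigOr_neg_imp_of_subset_insert L hL
  set B := bigOr (L'.map ILForm.neg)
  have hM' : (A.neg.and C.box).rhd ((B.or C.box.neg).and C.box) ∈ Γ :=
    hΓ.mem_of_prov_imp (hM _ _ C) (hΓ.rhd_mem_of_imp_right hP hAL hLL')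
  have hB : (C.box.imp A).neg.rhd B ∈ Γ :=
    hΓ.rhd_mem_of_imp_left hP
      (hΓ.rhd_mem_of_imp_right hP hM'
        (hP.of_taut fun v hv => by simp only [hv.imp, hv.or, hv.and, hv.neg]; grind))
      (hP.of_taut fun v hv => by simp only [hv.imp, hv.and, hv.neg]; grind)
  obtain ⟨hCA, hCA_box⟩ := h _ L' hL'S hB
  have hC_box : C.box.box ∈ Δ := hΔ.mem_of_prov_imp (hP.box_imp_box_box C) hC
  exact ⟨hΔ.mem_of_imp_mem hCA hC,
    hΔ.mem_of_imp_mem (hΔ.mem_of_prov_imp (hP.il .K) hCA_box) hC_box⟩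

theorem union_of_finite (hP : ILExtension P)
    (hM : ∀ A B C : ILForm, P ((A.rhd B).imp ((A.and C.box).rhd (B.and C.box))))
    (hΓ : ILMCS P Γ) (hΔ : ILMCS P Δ) (h : Assuring Γ Δ S) {T : Set ILForm}
    (hT : T.Finite) (hTΔ : T ⊆ {X | ∃ C : ILForm, X = C.box ∧ C.box ∈ Δ}) :
    Assuring Γ Δ (S ∪ T) := by
  induction T, hT using Set.Finite.induction_on with
  | empty => simpa using h
  | @insert X T _ _ ih =>
    obtain ⟨C, rfl, hC⟩ := hTΔ (Set.mem_insert _ _)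
    rw [Set.union_insert]
    exact (ih ((Set.subset_insert _ _).trans hTΔ)).insert_box hP hM hΓ hΔ hC

end Assuring

/-- For logics containing M: (A▷B)→(A∧□C ▷ B∧□C), we may add Δ's boxes to the label. -/
theorem labelling_lemma_M (P : ILForm → Prop) (hP : ILExtension P)
    (hprM : ∀ A B C : ILForm,
      P ((A.rhd B).imp ((A.and C.box).rhd (B.and C.box))))
    (Γ Δ : Set ILForm) (hΓ : ILMCS P Γ) (hΔ : ILMCS P Δ)
    (S : Set ILForm) (h : Assuring Γ Δ S) :
    Assuring Γ Δ (S ∪ {X | ∃ C : ILForm, X = C.box ∧ C.box ∈ Δ}) := by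
  intro A L hL
  set Boxes := {X | ∃ C : ILForm, X = C.box ∧ C.box ∈ Δ}
  have hfinite : ({X | X ∈ L} ∩ Boxes).Finite := L.finite_toSet.inter_of_left _
  refine h.union_of_finite hP hprM hΓ hΔ hfinite Set.inter_subset_right A L fun B hB => ?_
  rcases hL B hB with hS | hBoxes
  · exact Or.inl hS
  · exact Or.inr ⟨hB, hBoxes⟩
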